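/- Let g, P > 0 and x ∈ ℝ, let Z be a standard Gaussian random variable, and set Y := √g·x + Z. Then Var[ ln( φ₁(Y − √g·x) / φ_{√(1+gP)}(Y) ) ] = ( 4·g·x² + 2·g²·P² ) / ( 4·(1 + g·P)² ). -/

import Mathlib

/-!
In the noise variable `z` the log-likelihood ratio is a quadratic polynomial `c + b z + a z²` with
`b = √g x / (1 + gP)` and `a = -gP / (2 (1 + gP))`. For `Z ~ N(0, v)` one has
`Var[c + bZ + aZ²] = b² v + 2 a² v²`, because `E Z³ = 0` and `E Z⁴ = 3 v²`; both moments come from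
Stein's identity `E Z^(n+2) = (n + 1) v E Z^n`, i.e. integration by parts against the density,
whose derivative is `-(x / v)` times itself.
-/

open MeasureTheory ProbabilityTheory Real
open scoped NNReal

/-- Density of the centered Gaussian with standard deviation `σ`. -/
noncomputable def gaussDensity (σ y : ℝ) : ℝ :=
  (1 / (σ * Real.sqrt (2 * Real.pi))) * Real.exp (-(y ^ 2) / (2 * σ ^ 2))

lemma integrable_pow_gaussianReal (μ : ℝ) (v : ℝ≥0) (n : ℕ) :
    Integrable (fun x ↦ x ^ n) (gaussianReal μ v) :=
  integrable_pow_of_mem_interior_integrableExpSet (by simp) n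

lemma integrable_pow_mul_gaussianPDFReal (μ : ℝ) (v : ℝ≥0) (n : ℕ) :
    Integrable (fun x ↦ x ^ n * gaussianPDFReal μ v x) := by
  rcases eq_or_ne v 0 with rfl | hv
  · simp
  have h := integrable_pow_gaussianReal μ v n
  rw [gaussianReal_of_var_ne_zero μ hv, integrable_withDensity_iff_integrable_smul'
    (measurable_gaussianPDF μ v) (.of_forall fun _ ↦ gaussianPDF_lt_top)] at h
  simpa [mul_comm] using h

lemma hasDerivAt_gaussianPDFReal (μ : ℝ) (v : ℝ≥0) (x : ℝ) :
    HasDerivAt (gaussianPDFReal μ v) (-(x - μ) / v * gaussianPDFReal μ v x) x := by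
  have h := ((((hasDerivAt_id' x).sub_const μ).fun_pow 2).fun_neg.div_const
    (2 * (v : ℝ))).exp.const_mul (√(2 * π * v))⁻¹
  rw [gaussianPDFReal_def]
  refine h.congr_deriv ?_
  push_cast
  ring

lemma integral_pow_add_two_gaussianReal (v : ℝ≥0) (n : ℕ) :
    ∫ x, x ^ (n + 2) ∂gaussianReal 0 v = (n + 1) * v * ∫ x, x ^ n ∂gaussianReal 0 v := by
  rcases eq_or_ne v 0 with rfl | hv
  · simp
  simp only [integral_gaussianReal_eq_integral_smul hv, smul_eq_mul]
  set p := gaussianPDFReal 0 v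
  have hmoment := integrable_pow_mul_gaussianPDFReal 0 v
  have hparts := integral_mul_deriv_eq_deriv_mul_of_integrable
    (u := fun x : ℝ ↦ x ^ (n + 1)) (u' := fun x ↦ (n + 1) * x ^ n)
    (fun x _ ↦ by simpa using hasDerivAt_pow (n + 1) x)
    (fun x _ ↦ hasDerivAt_gaussianPDFReal 0 v x)
    (((hmoment (n + 2)).const_mul (-(v : ℝ)⁻¹)).congr (.of_forall fun x ↦ by simp; ring))
    (((hmoment n).const_mul (n + 1)).congr (.of_forall fun x ↦ by simp; ring))
    ((hmoment (n + 1)).congr (.of_forall fun x ↦ by simp))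
  have hlhs : ∫ x, x ^ (n + 1) * (-(x - 0) / v * p x) = -(v : ℝ)⁻¹ * ∫ x, p x * x ^ (n + 2) := by
    rw [← integral_const_mul]; congr 1 with x; ring
  have hrhs : ∫ x, (n + 1) * x ^ n * p x = (n + 1) * ∫ x, p x * x ^ n := by
    rw [← integral_const_mul]; congr 1 with x; ring
  rw [hlhs, hrhs] at hparts
  field_simp at hparts
  linear_combination -hparts

lemma integral_sq_gaussianReal (v : ℝ≥0) : ∫ x, x ^ 2 ∂gaussianReal 0 v = v := by
  simpa using integral_pow_add_two_gaussianReal v 0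

lemma integral_pow_three_gaussianReal (v : ℝ≥0) : ∫ x, x ^ 3 ∂gaussianReal 0 v = 0 := by
  simpa using integral_pow_add_two_gaussianReal v 1

lemma integral_pow_four_gaussianReal (v : ℝ≥0) : ∫ x, x ^ 4 ∂gaussianReal 0 v = 3 * v ^ 2 := by
  rw [integral_pow_add_two_gaussianReal v 2, integral_sq_gaussianReal]
  push_cast
  ring

lemma memLp_two_pow_gaussianReal (μ : ℝ) (v : ℝ≥0) (n : ℕ) :
    MemLp (fun x ↦ x ^ n) 2 (gaussianReal μ v) := by
  rw [memLp_two_iff_integrable_sq (by fun_prop)]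
  simpa [← pow_mul] using integrable_pow_gaussianReal μ v (n * 2)

lemma variance_quadratic_gaussianReal (v : ℝ≥0) (a b c : ℝ) :
    Var[fun x ↦ c + b * x + a * x ^ 2; gaussianReal 0 v] = b ^ 2 * v + 2 * a ^ 2 * v ^ 2 := by
  have hX := memLp_two_pow_gaussianReal 0 v 1
  have hX2 := memLp_two_pow_gaussianReal 0 v 2
  simp only [pow_one] at hX
  have hvar_sq : Var[fun x ↦ x ^ 2; gaussianReal 0 v] = 2 * v ^ 2 := by
    rw [variance_eq_sub hX2]
    simp only [Pi.pow_apply, ← pow_mul, integral_pow_four_gaussianReal, integral_sq_gaussianReal]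
    ring
  have hcov : cov[fun x ↦ x, fun x ↦ x ^ 2; gaussianReal 0 v] = 0 := by
    rw [covariance_eq_sub hX hX2]
    simp only [Pi.mul_apply, ← pow_succ', integral_pow_three_gaussianReal, integral_id_gaussianReal]
    ring
  simp_rw [add_assoc]
  rw [variance_const_add (by fun_prop), variance_fun_add (hX.const_mul b) (hX2.const_mul a),
    variance_const_mul, variance_const_mul, covariance_const_mul_left, covariance_const_mul_right,
    variance_fun_id_gaussianReal, hvar_sq, hcov]
  ring

lemma gaussDensity_pos {σ : ℝ} (hσ : 0 < σ) (y : ℝ) : 0 < gaussDensity σ y := by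
  unfold gaussDensity
  positivity

lemma log_gaussDensity {σ : ℝ} (hσ : 0 < σ) (y : ℝ) :
    log (gaussDensity σ y) = -log (σ * √(2 * π)) - y ^ 2 / (2 * σ ^ 2) := by
  rw [gaussDensity, log_mul (by positivity) (exp_pos _).ne', log_exp, one_div, log_inv]
  ring

lemma log_gaussDensity_div_gaussDensity {σ τ : ℝ} (hσ : 0 < σ) (hτ : 0 < τ) (y w : ℝ) :
    log (gaussDensity σ y / gaussDensity τ w)
      = log τ - log σ - y ^ 2 / (2 * σ ^ 2) + w ^ 2 / (2 * τ ^ 2) := by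
  rw [log_div (gaussDensity_pos hσ y).ne' (gaussDensity_pos hτ w).ne', log_gaussDensity hσ,
    log_gaussDensity hτ, log_mul hσ.ne' (by positivity), log_mul hτ.ne' (by positivity)]
  ring

/-- Variance of the single-letter modified information density of the Gaussian
channel `Y = √g·x + Z`, `Z ~ N(0,1)`, with reference output distribution
`N(0, 1+gP)`. -/
theorem variance_info_density (g P x : ℝ) (hg : 0 < g) (hP : 0 < P) :
    variance
      (fun z : ℝ =>
        Real.log
          (gaussDensity 1 ((Real.sqrt g * x + z) - Real.sqrt g * x) /
            gaussDensity (Real.sqrt (1 + g * P)) (Real.sqrt g * x + z)))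
      (gaussianReal 0 1) =
      (4 * g * x ^ 2 + 2 * g ^ 2 * P ^ 2) / (4 * (1 + g * P) ^ 2) := by
  have hs : 0 < 1 + g * P := by positivity
  have hquadratic : (fun z : ℝ ↦ log (gaussDensity 1 ((√g * x + z) - √g * x) /
        gaussDensity √(1 + g * P) (√g * x + z)))
      = fun z ↦ (log √(1 + g * P) + g * x ^ 2 / (2 * (1 + g * P)))
          + √g * x / (1 + g * P) * z + (1 / (2 * (1 + g * P)) - 1 / 2) * z ^ 2 := by
    funext z
    have hsq : (√g * x + z) ^ 2 = g * x ^ 2 + 2 * (√g * x) * z + z ^ 2 := by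
      rw [add_sq, mul_pow, sq_sqrt hg.le]
    rw [add_sub_cancel_left, log_gaussDensity_div_gaussDensity one_pos (sqrt_pos.2 hs),
      sq_sqrt hs.le, hsq, log_one]
    field_simp
    ring
  rw [hquadratic, variance_quadratic_gaussianReal, div_pow, mul_pow, sq_sqrt hg.le,
    NNReal.coe_one]
  field_simp
  ring
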